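/- Let θ > 0 and let (a,b) = ({a_j},{b_j}) be a solution of the inviscid dyadic MHD model on [0,∞) with componentwise positive initial data: a_j(0) > 0 and b_j(0) > 0 for all j ≥ 0. Then for every s > θ/3 the solution blows up in finite time in H^s: there exists a finite time T such that sup_{0 ≤ t < T} (‖a(t)‖_{H^s} + ‖b(t)‖_{H^s}) = ∞. -/

import Mathlib

/-!
If the `H^s` norm stayed bounded on `[0, T)`, then `|a_j|, |b_j| ≤ m λ^{-sj}` there. Choose
`γ < θ/3` with `θ - γ < 2s` and put `w = λ^{-γ}`, `p = λ^{(θ-γ)/2}`, so that `p² = w λ^θ`,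
`w p > 1` and `p λ^{-s} < 1`. With `X_j = p^j a_j`, the weighted derivative `w^j a_j'` equals
`w X_{j-1}² - p⁻¹ X_j X_{j+1}`, plus the same expression in `b`, plus the forcing. Since
`Σ X_j X_{j+1} ≤ Σ X_j²`, the functional `F = Σ_j w^j a_j` satisfies
`F' ≥ (w - p⁻¹) Σ X_j² ≥ c F²` (Cauchy–Schwarz), with `c = (w - p⁻¹)(1 - (w/p)²) > 0`.
Positivity of `a(0)` gives `F(0) > 0`, and the Riccati inequality `F' ≥ c F²` forces
`T ≤ 1 / (c F(0))`.
-/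

open MeasureTheory Filter
open scoped ENNReal

/-- The (possibly infinite) squared `H^s` norm of a sequence, with `λ_j = lam ^ j`:
`‖a‖_{H^s}² = Σ_j λ_j^{2s} a_j²`. -/
noncomputable def Hsq (lam s : ℝ) (a : ℕ → ℝ) : ℝ≥0∞ :=
  ∑' j : ℕ, ENNReal.ofReal ((lam ^ j) ^ (2 * s) * (a j) ^ 2)

/-- A solution of the inviscid dyadic MHD model on `[0,∞)`:
`a_j' = λ_{j-1}^θ a_{j-1}² − λ_j^θ a_j a_{j+1} + λ_{j-1}^θ b_{j-1}² − λ_j^θ b_j b_{j+1} + f_j`,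
`b_j' = λ_j^θ a_j b_{j+1} − λ_j^θ b_j a_{j+1}`, with `λ_j = lam ^ j`,
`a_{-1} ≡ b_{-1} ≡ 0`, `f_0 = f0 ≥ 0` and `f_j = 0` for `j ≥ 1`. -/
def IsMHDInviscidSol (lam θ f0 : ℝ) (a b : ℕ → ℝ → ℝ) : Prop :=
  ∀ j : ℕ, ∀ t ∈ Set.Ici (0 : ℝ),
    HasDerivWithinAt (a j)
      ((if j = 0 then (0 : ℝ) else (lam ^ (j - 1)) ^ θ * (a (j - 1) t) ^ 2)
        - (lam ^ j) ^ θ * a j t * a (j + 1) t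
        + (if j = 0 then (0 : ℝ) else (lam ^ (j - 1)) ^ θ * (b (j - 1) t) ^ 2)
        - (lam ^ j) ^ θ * b j t * b (j + 1) t
        + (if j = 0 then f0 else 0)) (Set.Ici 0) t ∧
    HasDerivWithinAt (b j)
      ((lam ^ j) ^ θ * a j t * b (j + 1) t
        - (lam ^ j) ^ θ * b j t * a (j + 1) t) (Set.Ici 0) t

open Set

theorem Summable.mul_of_summable_sq {ι : Type*} {u v : ι → ℝ} (hu : Summable fun i => u i ^ 2)
    (hv : Summable fun i => v i ^ 2) : Summable fun i => u i * v i := by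
  refine .of_norm_bounded ((hu.add hv).div_const 2) fun i => ?_
  rw [Real.norm_eq_abs, abs_mul, le_div_iff₀ two_pos, ← sq_abs (u i), ← sq_abs (v i)]
  linarith [two_mul_le_add_sq |u i| |v i|]

theorem sq_tsum_mul_le_tsum_sq_mul_tsum_sq {ι : Type*} {u v : ι → ℝ}
    (hu : Summable fun i => u i ^ 2) (hv : Summable fun i => v i ^ 2) :
    (∑' i, u i * v i) ^ 2 ≤ (∑' i, u i ^ 2) * ∑' i, v i ^ 2 :=
  le_of_tendsto_of_tendsto' ((hu.mul_of_summable_sq hv).hasSum.pow 2)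
    (Tendsto.mul hu.hasSum hv.hasSum) fun s => s.sum_mul_sq_le_sq_mul_sq u v

theorem summable_mul_succ {X : ℕ → ℝ} (hX : Summable fun j => X j ^ 2) :
    Summable fun j => X j * X (j + 1) :=
  hX.mul_of_summable_sq ((summable_nat_add_iff 1).mpr hX)

theorem tsum_mul_succ_le_tsum_sq {X : ℕ → ℝ} (hX : Summable fun j => X j ^ 2) :
    ∑' j, X j * X (j + 1) ≤ ∑' j, X j ^ 2 := by
  have hX' : Summable fun j => X (j + 1) ^ 2 := (summable_nat_add_iff 1).mpr hX
  have hcs := sq_tsum_mul_le_tsum_sq_mul_tsum_sq hX hX'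
  have hshift : ∑' j, X (j + 1) ^ 2 ≤ ∑' j, X j ^ 2 := by
    rw [hX.tsum_eq_zero_add]
    linarith [sq_nonneg (X 0)]
  have hnonneg : 0 ≤ ∑' j, X (j + 1) ^ 2 := tsum_nonneg fun j => sq_nonneg _
  nlinarith

theorem HasSum.shift {G : Type*} [AddCommGroup G] [TopologicalSpace G] [IsTopologicalAddGroup G]
    {u : ℕ → G} {S : G} (h : HasSum u S) :
    HasSum (fun j => if j = 0 then 0 else u (j - 1)) S := by
  rw [← hasSum_nat_add_iff' 1]
  simpa using h

theorem summable_sq_of_abs_le_geom {X : ℕ → ℝ} {m r : ℝ} (hr0 : 0 ≤ r) (hr : r < 1)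
    (hX : ∀ j, |X j| ≤ m * r ^ j) : Summable fun j => X j ^ 2 := by
  refine .of_norm_bounded ((summable_geometric_of_lt_one (sq_nonneg r)
    (by nlinarith)).mul_left (m ^ 2)) fun j => ?_
  rw [Real.norm_eq_abs, abs_pow, ← pow_mul, pow_mul', ← mul_pow]
  exact pow_le_pow_left₀ (abs_nonneg _) (hX j) 2

theorem abs_pow_mul_le {A : ℕ → ℝ} {m p q : ℝ} (hp : 0 ≤ p) (hA : ∀ j, |A j| ≤ m * q ^ j)
    (j : ℕ) : |p ^ j * A j| ≤ m * (p * q) ^ j := by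
  rw [abs_mul, abs_of_nonneg (pow_nonneg hp j), mul_pow]
  nlinarith [hA j, pow_nonneg hp j]

/-- The right-hand side of the `a_j` equation, with `λ_j^θ` written as `L ^ j` (`L = λ^θ`). -/
def dyadicRHS (L f0 : ℝ) (A B : ℕ → ℝ) (j : ℕ) : ℝ :=
  (if j = 0 then 0 else L ^ (j - 1) * A (j - 1) ^ 2) - L ^ j * A j * A (j + 1)
    + (if j = 0 then 0 else L ^ (j - 1) * B (j - 1) ^ 2) - L ^ j * B j * B (j + 1)
    + (if j = 0 then f0 else 0)

theorem IsMHDInviscidSol.hasDerivWithinAt_dyadicRHS {lam θ f0 : ℝ} {a b : ℕ → ℝ → ℝ}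
    (hlam : 0 ≤ lam) (h : IsMHDInviscidSol lam θ f0 a b) (j : ℕ) {t : ℝ} (ht : t ∈ Ici 0) :
    HasDerivWithinAt (a j) (dyadicRHS (lam ^ θ) f0 (a · t) (b · t) j) (Ici 0) t := by
  simpa only [dyadicRHS, ← Real.rpow_pow_comm hlam] using (h j t ht).1

noncomputable def weightedTransfer (w p : ℝ) (X : ℕ → ℝ) (j : ℕ) : ℝ :=
  w * (if j = 0 then 0 else X (j - 1) ^ 2) - p⁻¹ * (X j * X (j + 1))

section Transfer

variable {w p L : ℝ} {X E : ℕ → ℝ}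

theorem pow_mul_dyadicRHS_eq (hp : p ≠ 0) (hpL : p ^ 2 = w * L) (f0 : ℝ) (A B : ℕ → ℝ)
    (j : ℕ) : w ^ j * dyadicRHS L f0 A B j = weightedTransfer w p (fun k => p ^ k * A k) j
      + weightedTransfer w p (fun k => p ^ k * B k) j + if j = 0 then f0 else 0 := by
  have hwL (n : ℕ) : w ^ n * L ^ n = p ^ (2 * n) := by rw [← mul_pow, ← hpL, pow_mul]
  rcases j with _ | k
  · simp only [dyadicRHS, weightedTransfer, ↓reduceIte, pow_zero]
    field_simp
    ring
  · simp only [dyadicRHS, weightedTransfer, Nat.add_sub_cancel, if_neg (Nat.succ_ne_zero k)]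
    field_simp
    linear_combination (w * A k ^ 2 + w * B k ^ 2) * hwL k * p
      - (A (k + 1) * A (k + 2) + B (k + 1) * B (k + 2)) * hwL (k + 1) * p

theorem hasSum_weightedTransfer (hX : Summable fun j => X j ^ 2) :
    HasSum (weightedTransfer w p X) (w * ∑' j, X j ^ 2 - p⁻¹ * ∑' j, X j * X (j + 1)) :=
  (hX.hasSum.shift.mul_left w).sub ((summable_mul_succ hX).hasSum.mul_left p⁻¹)

theorem sub_inv_mul_tsum_sq_le_tsum_weightedTransfer (hp : 0 < p)
    (hX : Summable fun j => X j ^ 2) :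
    (w - p⁻¹) * ∑' j, X j ^ 2 ≤ ∑' j, weightedTransfer w p X j := by
  rw [(hasSum_weightedTransfer hX).tsum_eq, sub_mul]
  exact sub_le_sub_left (mul_le_mul_of_nonneg_left (tsum_mul_succ_le_tsum_sq hX)
    (inv_nonneg.2 hp.le)) _

theorem abs_weightedTransfer_le (hw : 0 ≤ w) (hp : 0 < p) (hXE : ∀ j, |X j| ≤ E j) (j : ℕ) :
    |weightedTransfer w p X j|
      ≤ w * (if j = 0 then 0 else E (j - 1) ^ 2) + p⁻¹ * (E j * E (j + 1)) := by
  have hsq (k : ℕ) : X k ^ 2 ≤ E k ^ 2 := sq_le_sq' (abs_le.1 (hXE k)).1 (abs_le.1 (hXE k)).2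
  refine (abs_sub _ _).trans (add_le_add ?_ ?_)
  · rw [abs_mul, abs_of_nonneg hw]
    gcongr
    split_ifs
    · simp
    · rw [abs_of_nonneg (sq_nonneg _)]
      exact hsq _
  · rw [abs_mul, abs_of_pos (inv_pos.2 hp), abs_mul]
    gcongr
    · exact (abs_nonneg _).trans (hXE j)
    · exact hXE j
    · exact hXE (j + 1)

end Transfer

theorem mul_sq_tsum_le_tsum_pow_mul_dyadicRHS {w p L f0 : ℝ} {A B : ℕ → ℝ} (hw : 0 < w)
    (hp : 0 < p) (hpL : p ^ 2 = w * L) (hwp : 1 < w * p) (hw_lt : w < p) (hf0 : 0 ≤ f0)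
    (hA : Summable fun j => (p ^ j * A j) ^ 2) (hB : Summable fun j => (p ^ j * B j) ^ 2) :
    (w - p⁻¹) * (1 - (w / p) ^ 2) * (∑' j, w ^ j * A j) ^ 2
      ≤ ∑' j, w ^ j * dyadicRHS L f0 A B j := by
  have hκ : 0 < w - p⁻¹ := by
    rwa [sub_pos, inv_lt_iff_one_lt_mul₀ hp]
  have hr0 : 0 ≤ (w / p) ^ 2 := sq_nonneg _
  have hr1 : (w / p) ^ 2 < 1 := by
    rw [sq_lt_one_iff₀ (div_nonneg hw.le hp.le), div_lt_one hp]
    exact hw_lt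
  have hgeom : Summable fun j => ((w / p) ^ j) ^ 2 := by
    simpa only [pow_right_comm _ 2] using summable_geometric_of_lt_one hr0 hr1
  have hcs : (∑' j, w ^ j * A j) ^ 2 ≤ (1 - (w / p) ^ 2)⁻¹ * ∑' j, (p ^ j * A j) ^ 2 := by
    have h := sq_tsum_mul_le_tsum_sq_mul_tsum_sq hgeom hA
    simp only [pow_right_comm _ _ 2, tsum_geometric_of_lt_one hr0 hr1] at h
    convert h using 4 with j
    rw [← mul_assoc, ← mul_pow, div_mul_cancel₀ _ hp.ne']
  have hsum : ∑' j, w ^ j * dyadicRHS L f0 A B j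
      = ∑' j, weightedTransfer w p (fun k => p ^ k * A k) j
        + ∑' j, weightedTransfer w p (fun k => p ^ k * B k) j + f0 := by
    simp only [pow_mul_dyadicRHS_eq hp.ne' hpL]
    rw [((hasSum_weightedTransfer hA).add (hasSum_weightedTransfer hB)).add
      (hasSum_ite_eq 0 f0) |>.tsum_eq, (hasSum_weightedTransfer hA).tsum_eq,
      (hasSum_weightedTransfer hB).tsum_eq]
  have hTA := sub_inv_mul_tsum_sq_le_tsum_weightedTransfer (w := w) hp hA
  have hTB := sub_inv_mul_tsum_sq_le_tsum_weightedTransfer (w := w) hp hB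
  have hB0 : 0 ≤ (w - p⁻¹) * ∑' j, (p ^ j * B j) ^ 2 :=
    mul_nonneg hκ.le (tsum_nonneg fun j => sq_nonneg _)
  calc (w - p⁻¹) * (1 - (w / p) ^ 2) * (∑' j, w ^ j * A j) ^ 2
      ≤ (w - p⁻¹) * (1 - (w / p) ^ 2) * ((1 - (w / p) ^ 2)⁻¹ * ∑' j, (p ^ j * A j) ^ 2) := by
        gcongr
    _ = (w - p⁻¹) * ∑' j, (p ^ j * A j) ^ 2 := by
        rw [mul_assoc (w - p⁻¹), mul_inv_cancel_left₀ (sub_pos.2 hr1).ne']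
    _ ≤ _ := by linarith

theorem mul_lt_inv_of_sq_le_deriv {F F' : ℝ → ℝ} {c T : ℝ} (hc : 0 < c) (hT : 0 ≤ T)
    (hF : ContinuousOn F (Icc 0 T)) (hF' : ∀ t ∈ Ioo 0 T, HasDerivAt F (F' t) t)
    (hsq : ∀ t ∈ Ioo 0 T, c * F t ^ 2 ≤ F' t) (h0 : 0 < F 0) : c * T < (F 0)⁻¹ := by
  have hmono : MonotoneOn F (Icc 0 T) := by
    refine monotoneOn_of_hasDerivWithinAt_nonneg (f' := F') (convex_Icc 0 T) hF (fun t ht => ?_)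
      fun t ht => ?_ <;> rw [interior_Icc] at ht
    · exact (hF' t ht).hasDerivWithinAt
    · exact (mul_nonneg hc.le (sq_nonneg _)).trans (hsq t ht)
  have hpos (t : ℝ) (ht : t ∈ Icc 0 T) : 0 < F t := h0.trans_le (hmono ⟨le_rfl, hT⟩ ht ht.1)
  -- `(1 / F)' = -F' / F² ≤ -c`.
  have hanti : AntitoneOn (fun t => (F t)⁻¹ + c * t) (Icc 0 T) := by
    refine antitoneOn_of_hasDerivWithinAt_nonpos (f' := fun t => -F' t / F t ^ 2 + c * 1)
      (convex_Icc 0 T) ((hF.inv₀ fun t ht => (hpos t ht).ne').add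
        (continuousOn_const.mul continuousOn_id)) (fun t ht => ?_) fun t ht => ?_
      <;> rw [interior_Icc] at ht <;> have hFt := hpos t (Ioo_subset_Icc_self ht)
    · exact (((hF' t ht).inv hFt.ne').add ((hasDerivAt_id t).const_mul c)).hasDerivWithinAt
    · rw [mul_one, neg_div, neg_add_nonpos_iff, le_div_iff₀ (by positivity)]
      exact hsq t ht
  have hK := hanti ⟨le_rfl, hT⟩ ⟨hT, le_rfl⟩ hT
  simp only [mul_zero, add_zero] at hK
  linarith [inv_pos.2 (hpos T ⟨hT, le_rfl⟩)]

section Lifespan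

variable {w p q L f0 m T : ℝ} {a b : ℕ → ℝ → ℝ}

theorem continuousOn_tsum_pow_mul (hw : 0 ≤ w) (hq : 0 ≤ q) (hwq : w * q < 1)
    (ha : ∀ j, ∀ t ∈ Ici (0 : ℝ), HasDerivWithinAt (a j) (dyadicRHS L f0 (a · t) (b · t) j)
      (Ici 0) t)
    (hbd : ∀ t ∈ Ico 0 T, ∀ j, |a j t| ≤ m * q ^ j) :
    ContinuousOn (fun t => ∑' j, w ^ j * a j t) (Ico 0 T) :=
  continuousOn_tsum
    (fun j => continuousOn_const.mul fun t ht => (ha j t ht.1).continuousWithinAt.mono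
      Ico_subset_Ici_self)
    ((summable_geometric_of_lt_one (mul_nonneg hw hq) hwq).mul_left m)
    fun j t ht => abs_pow_mul_le hw (hbd t ht) j

theorem hasDerivAt_tsum_pow_mul (hw : 0 ≤ w) (hp : 0 < p) (hpL : p ^ 2 = w * L)
    (hw_lt : w < p) (hq : 0 ≤ q) (hpq : p * q < 1)
    (ha : ∀ j, ∀ t ∈ Ici (0 : ℝ), HasDerivWithinAt (a j) (dyadicRHS L f0 (a · t) (b · t) j)
      (Ici 0) t)
    (hbd : ∀ t ∈ Ico 0 T, ∀ j, |a j t| ≤ m * q ^ j ∧ |b j t| ≤ m * q ^ j) :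
    ∀ t ∈ Ioo 0 T, HasDerivAt (fun t => ∑' j, w ^ j * a j t)
      (∑' j, w ^ j * dyadicRHS L f0 (a · t) (b · t) j) t := by
  set E : ℕ → ℝ := fun j => m * (p * q) ^ j
  have hE : Summable fun j => E j ^ 2 :=
    summable_sq_of_abs_le_geom (m := |m|) (mul_nonneg hp.le hq) hpq fun j => by
      rw [abs_mul, abs_pow, abs_of_nonneg (mul_nonneg hp.le hq)]
  have hbound (j : ℕ) (t : ℝ) (ht : t ∈ Ioo 0 T) :
      ‖w ^ j * dyadicRHS L f0 (a · t) (b · t) j‖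
        ≤ 2 * (w * (if j = 0 then 0 else E (j - 1) ^ 2) + p⁻¹ * (E j * E (j + 1)))
          + |if j = 0 then f0 else 0| := by
    have ht' : t ∈ Ico 0 T := Ioo_subset_Ico_self ht
    rw [Real.norm_eq_abs, pow_mul_dyadicRHS_eq hp.ne' hpL]
    refine (abs_add_le _ _).trans (add_le_add_left ((abs_add_le _ _).trans ?_) _)
    linarith [abs_weightedTransfer_le (E := E) hw hp
        (abs_pow_mul_le hp.le fun j => (hbd t ht' j).1) j,
      abs_weightedTransfer_le (E := E) hw hp (abs_pow_mul_le hp.le fun j => (hbd t ht' j).2) j]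
  have hsummable : Summable fun j =>
      2 * (w * (if j = 0 then 0 else E (j - 1) ^ 2) + p⁻¹ * (E j * E (j + 1)))
        + |if j = 0 then f0 else 0| :=
    (((hE.hasSum.shift.mul_left w).summable.add ((summable_mul_succ hE).mul_left _)).mul_left
      2).add (hasSum_ite_eq 0 f0).summable.abs
  intro t ht
  refine hasDerivAt_tsum_of_isPreconnected hsummable isOpen_Ioo isPreconnected_Ioo
    (fun j s hs => ((ha j s hs.1.le).hasDerivAt (Ici_mem_nhds hs.1)).const_mul _) hbound ht
    (.of_norm_bounded ((summable_geometric_of_lt_one (mul_nonneg hw hq)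
      ((mul_le_mul_of_nonneg_right hw_lt.le hq).trans_lt hpq)).mul_left m)
      fun j => abs_pow_mul_le hw (fun j => (hbd t (Ioo_subset_Ico_self ht) j).1) j) ht

theorem lifespan_le (hw : 0 < w) (hp : 0 < p) (hpL : p ^ 2 = w * L) (hwp : 1 < w * p)
    (hw_lt : w < p) (hq : 0 ≤ q) (hpq : p * q < 1) (hf0 : 0 ≤ f0)
    (ha : ∀ j, ∀ t ∈ Ici (0 : ℝ), HasDerivWithinAt (a j) (dyadicRHS L f0 (a · t) (b · t) j)
      (Ici 0) t)
    (hbd : ∀ t ∈ Ico 0 T, ∀ j, |a j t| ≤ m * q ^ j ∧ |b j t| ≤ m * q ^ j)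
    (ha0 : ∀ j, 0 ≤ a j 0) (ha00 : 0 < a 0 0) :
    T ≤ ((w - p⁻¹) * (1 - (w / p) ^ 2) * ∑' j, w ^ j * a j 0)⁻¹ := by
  set c := (w - p⁻¹) * (1 - (w / p) ^ 2)
  set F : ℝ → ℝ := fun t => ∑' j, w ^ j * a j t
  have hc : 0 < c := by
    have hκ : 0 < w - p⁻¹ := by rwa [sub_pos, inv_lt_iff_one_lt_mul₀ hp]
    have hr : (w / p) ^ 2 < 1 := by
      rwa [sq_lt_one_iff₀ (div_nonneg hw.le hp.le), div_lt_one hp]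
    exact mul_pos hκ (sub_pos.2 hr)
  have hwq : w * q < 1 := (mul_le_mul_of_nonneg_right hw_lt.le hq).trans_lt hpq
  by_contra! hT
  have hT0 : 0 ∈ Ico 0 T := ⟨le_rfl, (inv_nonneg.2 (mul_nonneg hc.le
    (tsum_nonneg fun j => mul_nonneg (pow_nonneg hw.le j) (ha0 j)))).trans_lt hT⟩
  have hF0 : 0 < F 0 :=
    Summable.tsum_pos (.of_norm_bounded ((summable_geometric_of_lt_one
      (mul_nonneg hw.le hq) hwq).mul_left m) (abs_pow_mul_le hw.le fun j => (hbd 0 hT0 j).1))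
      (fun j => mul_nonneg (pow_nonneg hw.le j) (ha0 j)) 0 (by simpa using ha00)
  have hlt := mul_lt_inv_of_sq_le_deriv (F := F) hc (by positivity)
    ((continuousOn_tsum_pow_mul hw.le hq hwq ha fun t ht j => (hbd t ht j).1).mono
      (Icc_subset_Ico_right hT))
    (fun t ht => hasDerivAt_tsum_pow_mul hw.le hp hpL hw_lt hq hpq ha hbd t
      ⟨ht.1, ht.2.trans hT⟩)
    (fun t ht => mul_sq_tsum_le_tsum_pow_mul_dyadicRHS hw hp hpL hwp hw_lt hf0
      (summable_sq_of_abs_le_geom (mul_nonneg hp.le hq) hpq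
        (abs_pow_mul_le hp.le fun j => (hbd t ⟨ht.1.le, ht.2.trans hT⟩ j).1))
      (summable_sq_of_abs_le_geom (mul_nonneg hp.le hq) hpq
        (abs_pow_mul_le hp.le fun j => (hbd t ⟨ht.1.le, ht.2.trans hT⟩ j).2)))
    hF0
  rw [mul_inv, mul_inv_cancel_left₀ hc.ne'] at hlt
  exact lt_irrefl _ hlt

end Lifespan

theorem abs_le_of_Hsq_le {lam s : ℝ} (hlam : 0 < lam) {A : ℕ → ℝ} {M : ℝ≥0∞}
    (hA : Hsq lam s A ≤ M) (hM : M ≠ ⊤) (j : ℕ) : |A j| ≤ √M.toReal * (lam ^ (-s)) ^ j := by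
  have hterm : (lam ^ j) ^ (2 * s) * A j ^ 2 ≤ M.toReal :=
    (ENNReal.ofReal_le_iff_le_toReal hM).1 ((ENNReal.le_tsum j).trans hA)
  have hweight : (lam ^ j) ^ (2 * s) = ((lam ^ s) ^ j) ^ 2 := by
    rw [← Real.rpow_pow_comm hlam.le, ← pow_mul, ← Real.rpow_natCast, ← Real.rpow_natCast,
      ← Real.rpow_mul hlam.le, ← Real.rpow_mul hlam.le]
    push_cast
    ring_nf
  have hinv : (lam ^ s) ^ j * (lam ^ (-s)) ^ j = 1 := by
    rw [← mul_pow, ← Real.rpow_add hlam, add_neg_cancel, Real.rpow_zero, one_pow]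
  have hsqrt : |A j * (lam ^ s) ^ j| ≤ √M.toReal :=
    Real.abs_le_sqrt (by rw [mul_pow, mul_comm, ← hweight]; exact hterm)
  calc |A j| = |A j * (lam ^ s) ^ j| * (lam ^ (-s)) ^ j := by
        rw [abs_mul, abs_of_pos (pow_pos (Real.rpow_pos_of_pos hlam s) j), mul_assoc, hinv,
          mul_one]
    _ ≤ √M.toReal * (lam ^ (-s)) ^ j := by gcongr

theorem exists_abs_le_of_iSup_Hsq_ne_top {lam s T : ℝ} (hlam : 0 < lam) {a b : ℕ → ℝ → ℝ}
    (h : (⨆ t ∈ Ico (0 : ℝ) T, (Hsq lam s (fun j => a j t) + Hsq lam s (fun j => b j t))) ≠ ⊤) :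
    ∃ m, ∀ t ∈ Ico 0 T, ∀ j, |a j t| ≤ m * (lam ^ (-s)) ^ j ∧ |b j t| ≤ m * (lam ^ (-s)) ^ j := by
  refine ⟨√(⨆ t ∈ Ico (0 : ℝ) T,
    (Hsq lam s (fun j => a j t) + Hsq lam s (fun j => b j t))).toReal, fun t ht j => ?_⟩
  have hle := le_biSup (fun t => Hsq lam s (fun j => a j t) + Hsq lam s (fun j => b j t)) ht
  exact ⟨abs_le_of_Hsq_le hlam (le_self_add.trans hle) h j,
    abs_le_of_Hsq_le hlam (le_add_self.trans hle) h j⟩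

theorem exists_weights {lam θ s : ℝ} (hlam : 1 < lam) (hθ : 0 < θ) (hs : θ / 3 < s) :
    ∃ w p : ℝ, 0 < w ∧ 0 < p ∧ p ^ 2 = w * lam ^ θ ∧ 1 < w * p ∧ w < p ∧
      p * lam ^ (-s) < 1 := by
  have hl0 : 0 < lam := by linarith
  obtain ⟨γ, hγ, hγ3⟩ :=
    exists_between (max_lt (show θ - 2 * s < θ / 3 by linarith) (show -θ < θ / 3 by linarith))
  rw [max_lt_iff] at hγ
  refine ⟨lam ^ (-γ), lam ^ ((θ - γ) / 2), Real.rpow_pos_of_pos hl0 _,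
    Real.rpow_pos_of_pos hl0 _, ?_, ?_, Real.rpow_lt_rpow_of_exponent_lt hlam (by linarith), ?_⟩
  · rw [← Real.rpow_natCast, ← Real.rpow_mul hl0.le, ← Real.rpow_add hl0]
    ring_nf
  · rw [← Real.rpow_add hl0]
    exact Real.one_lt_rpow hlam (by linarith)
  · rw [← Real.rpow_add hl0]
    exact Real.rpow_lt_one_of_one_lt_of_neg hlam (by linarith)

/-- Dai–Friedlander: a solution of the inviscid dyadic MHD model with componentwise
positive initial data blows up in finite time in `H^s` for every `s > θ/3`. -/
theorem mhd_inviscid_blowup (lam θ f0 : ℝ) (hlam : 1 < lam) (hθ : 0 < θ)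
    (hf0 : 0 ≤ f0) (a b : ℕ → ℝ → ℝ) (hsol : IsMHDInviscidSol lam θ f0 a b)
    (hpos : ∀ j : ℕ, 0 < a j 0 ∧ 0 < b j 0) :
    ∀ s : ℝ, θ / 3 < s → ∃ T : ℝ, 0 < T ∧
      (⨆ t ∈ Set.Ico (0 : ℝ) T,
        (Hsq lam s (fun j => a j t) + Hsq lam s (fun j => b j t))) = ⊤ := by
  intro s hs
  have hl0 : 0 < lam := by linarith
  obtain ⟨w, p, hw, hp, hpL, hwp, hw_lt, hpq⟩ := exists_weights hlam hθ hs
  set T₀ := ((w - p⁻¹) * (1 - (w / p) ^ 2) * ∑' j, w ^ j * a j 0)⁻¹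
  refine ⟨|T₀| + 1, by positivity, ?_⟩
  by_contra hfin
  obtain ⟨m, hm⟩ := exists_abs_le_of_iSup_Hsq_ne_top hl0 hfin
  have hT₀ : |T₀| + 1 ≤ T₀ :=
    lifespan_le hw hp hpL hwp hw_lt (Real.rpow_nonneg hl0.le _) hpq hf0
      (fun j t ht => hsol.hasDerivWithinAt_dyadicRHS hl0.le j ht) hm (fun j => (hpos j).1.le)
      (hpos 0).1
  linarith [le_abs_self T₀]
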